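/- Let S_Z be an orbital fuzzy iterated function system and u ∈ F*_S. Then for every x ∈ [u]^*, supp u_x ⊆ A_x, where u_x = lim_n Z^[n](δ_x) and A_x = lim_n F_S^[n]({x}) is the attractor of the underlying orbital IFS starting at x. -/

import Mathlib

open Metric Filter Topology Set

/-- The orbit of a point `x` under the family of maps `f i`:
`x` together with all images of `x` under finite compositions of the `f i`. -/
def orbitIFS {X I : Type*} (f : I → X → X) (x : X) : Set X :=
  ⋃ l : List I, {l.foldr (fun i y => f i y) x}

/-- The fractal (Hutchinson–Barnsley) operator `K ↦ ⋃ i, f i '' K`. -/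
def fractalOp {X I : Type*} (f : I → X → X) (K : Set X) : Set X :=
  ⋃ i, f i '' K

/-- Image of a fuzzy set under a map: `f(u)(y) = sup_{x ∈ f⁻¹ y} u x` (0 if empty). -/
noncomputable def fuzzyImage {X : Type*} (g : X → X) (u : X → ℝ) : X → ℝ :=
  fun y => sSup (u '' (g ⁻¹' {y}))

/-- The fuzzy Hutchinson–Barnsley operator `Z(u) = ∨ i, ρ i (f i (u))`. -/
noncomputable def Zop {X I : Type*} (f : I → X → X) (ρ : I → ℝ → ℝ) (u : X → ℝ) : X → ℝ :=
  fun y => ⨆ i, ρ i (fuzzyImage (f i) u y)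

/-- The metric `d_∞(u,v) = sup_{α ∈ (0,1]} h([u]^α, [v]^α)`. -/
noncomputable def dInfty {X : Type*} [MetricSpace X] (u v : X → ℝ) : ℝ :=
  ⨆ α : Ioc (0:ℝ) 1, hausdorffDist {x | (α:ℝ) ≤ u x} {x | (α:ℝ) ≤ v x}

/-- The support of a fuzzy set: the closure of `{x | 0 < u x}`. -/
def fsupp {X : Type*} [MetricSpace X] (u : X → ℝ) : Set X := closure {x | 0 < u x}

/-- The crisp fuzzy point `δ_s`. -/
def fdelta {X : Type*} [DecidableEq X] (s : X) : X → ℝ := fun t => if t = s then 1 else 0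

/-- `u^x` : the restriction of `u` to the closure of the orbit of `w` (zero outside). -/
noncomputable def restrictO {X I : Type*} [MetricSpace X] (f : I → X → X) (u : X → ℝ)
    (w : X) : X → ℝ :=
  (closure (orbitIFS f w)).indicator u

/-- A normal compactly supported fuzzy set (with values in `[0,1]`). -/
def IsFuzzyN {X : Type*} [MetricSpace X] (u : X → ℝ) : Prop :=
  (∀ x, u x ∈ Icc (0:ℝ) 1) ∧ (∃ x, u x = 1) ∧ IsCompact (fsupp u)

/-- An upper semicontinuous normal compactly supported fuzzy set: membership in `F*_X`. -/
def IsFuzzyStar {X : Type*} [MetricSpace X] (u : X → ℝ) : Prop :=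
  IsFuzzyN u ∧ UpperSemicontinuous u

/-- Membership in `F*_S`: for each point of positive membership there is an orbit
containing it together with a point of membership one. -/
def InFS {X I : Type*} [MetricSpace X] (f : I → X → X) (u : X → ℝ) : Prop :=
  IsFuzzyStar u ∧ ∀ x, 0 < u x → ∃ w y, x ∈ orbitIFS f w ∧ y ∈ orbitIFS f w ∧ u y = 1

/-- The orbital contraction condition. -/
def OrbitalContr {X I : Type*} [MetricSpace X] (f : I → X → X) (C : ℝ) : Prop :=
  ∀ i x, ∀ y ∈ orbitIFS f x, ∀ z ∈ orbitIFS f x, dist (f i y) (f i z) ≤ C * dist y z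

/-- An admissible system of grey level maps. -/
def Admissible {I : Type*} (ρ : I → ℝ → ℝ) : Prop :=
  (∀ i, ρ i 0 = 0) ∧ (∀ i, MonotoneOn (ρ i) (Icc (0:ℝ) 1)) ∧
  (∀ i, ∀ t ∈ Icc (0:ℝ) 1, ContinuousWithinAt (ρ i) (Ici t) t) ∧
  (∀ i, ∀ t ∈ Icc (0:ℝ) 1, ρ i t ∈ Icc (0:ℝ) 1) ∧ (∃ j, ρ j 1 = 1)

/-!
Positive membership under `Z` only travels along the maps `f i`, so `Z^[n] δ_x` is positive
only on `F_S^[n] {x}`. If `u_x y = α > 0`, then `y` lies in the `α`-cut of `u_x`, which is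
`d_∞`-close to the (nonempty, by normality) `α`-cut of `Z^[n] δ_x`; that cut lies in
`F_S^[n] {x}`, which is Hausdorff-close to `A_x`. Hence `infDist y A_x` is bounded by two
sequences tending to `0`, and `y ∈ A_x` since `A_x` is closed.
-/

section FuzzyImage

variable {X : Type*}

lemma fuzzyImage_nonneg (g : X → X) {v : X → ℝ} (hv : ∀ z, 0 ≤ v z) (y : X) :
    0 ≤ fuzzyImage g v y :=
  Real.sSup_nonneg <| by rintro _ ⟨z, -, rfl⟩; exact hv z

lemma fuzzyImage_mem_Icc (g : X → X) {v : X → ℝ} (hv : ∀ z, v z ∈ Icc (0:ℝ) 1) (y : X) :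
    fuzzyImage g v y ∈ Icc (0:ℝ) 1 :=
  ⟨fuzzyImage_nonneg g (fun z => (hv z).1) y,
    Real.sSup_le (by rintro _ ⟨z, -, rfl⟩; exact (hv z).2) zero_le_one⟩

lemma fuzzyImage_apply_eq_one (g : X → X) {v : X → ℝ} (hv : ∀ z, v z ∈ Icc (0:ℝ) 1)
    {w : X} (hw : v w = 1) : fuzzyImage g v (g w) = 1 :=
  le_antisymm (fuzzyImage_mem_Icc g hv _).2 <|
    le_csSup ⟨1, by rintro _ ⟨z, -, rfl⟩; exact (hv z).2⟩ ⟨w, rfl, hw⟩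

lemma exists_pos_of_fuzzyImage_pos {g : X → X} {v : X → ℝ} {y : X}
    (h : 0 < fuzzyImage g v y) : ∃ z, g z = y ∧ 0 < v z := by
  by_contra! hle
  exact h.not_ge <| Real.sSup_nonpos <| by rintro _ ⟨z, hz, rfl⟩; exact hle z hz

end FuzzyImage

section Zop

variable {X I : Type*} {f : I → X → X} {ρ : I → ℝ → ℝ}

lemma Admissible.nonempty (hρ : Admissible ρ) : Nonempty I :=
  ⟨hρ.2.2.2.2.choose⟩

lemma Zop_bddAbove (hρ : Admissible ρ) {v : X → ℝ} (hv : ∀ z, v z ∈ Icc (0:ℝ) 1) (y : X) :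
    BddAbove (range fun i => ρ i (fuzzyImage (f i) v y)) :=
  ⟨1, by rintro _ ⟨i, rfl⟩; exact (hρ.2.2.2.1 i _ (fuzzyImage_mem_Icc (f i) hv y)).2⟩

lemma Zop_mem_Icc (hρ : Admissible ρ) {v : X → ℝ} (hv : ∀ z, v z ∈ Icc (0:ℝ) 1) (y : X) :
    Zop f ρ v y ∈ Icc (0:ℝ) 1 := by
  have hval : ∀ i, ρ i (fuzzyImage (f i) v y) ∈ Icc (0:ℝ) 1 :=
    fun i => hρ.2.2.2.1 i _ (fuzzyImage_mem_Icc (f i) hv y)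
  obtain ⟨j, -⟩ := hρ.2.2.2.2
  have := hρ.nonempty
  exact ⟨(hval j).1.trans (le_ciSup (Zop_bddAbove hρ hv y) j), ciSup_le fun i => (hval i).2⟩

lemma exists_Zop_eq_one (hρ : Admissible ρ) {v : X → ℝ} (hv : ∀ z, v z ∈ Icc (0:ℝ) 1)
    {w : X} (hw : v w = 1) : ∃ y, Zop f ρ v y = 1 := by
  obtain ⟨j, hj⟩ := hρ.2.2.2.2
  refine ⟨f j w, le_antisymm (Zop_mem_Icc hρ hv _).2 ?_⟩
  calc (1:ℝ) = ρ j (fuzzyImage (f j) v (f j w)) := by rw [fuzzyImage_apply_eq_one _ hv hw, hj]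
    _ ≤ Zop f ρ v (f j w) := le_ciSup (Zop_bddAbove hρ hv _) j

lemma setOf_Zop_pos_subset (hρ : Admissible ρ) {v : X → ℝ} (hv : ∀ z, 0 ≤ v z) :
    {y | 0 < Zop f ρ v y} ⊆ fractalOp f {z | 0 < v z} := by
  intro y hy
  have := hρ.nonempty
  obtain ⟨i, hi⟩ : ∃ i, 0 < ρ i (fuzzyImage (f i) v y) := by
    by_contra! hle
    exact (show Zop f ρ v y ≤ 0 from ciSup_le hle).not_gt hy
  have himage : 0 < fuzzyImage (f i) v y := by
    refine (fuzzyImage_nonneg (f i) hv y).lt_of_ne fun h => ?_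
    rw [← h, hρ.1 i] at hi
    exact hi.false
  obtain ⟨z, rfl, hz⟩ := exists_pos_of_fuzzyImage_pos himage
  exact mem_iUnion.2 ⟨i, z, hz, rfl⟩

end Zop

section Iterates

variable {X I : Type*} {f : I → X → X} {ρ : I → ℝ → ℝ}

lemma Zop_iterate_mem_Icc (hρ : Admissible ρ) {v : X → ℝ} (hv : ∀ z, v z ∈ Icc (0:ℝ) 1)
    (n : ℕ) (y : X) : (Zop f ρ)^[n] v y ∈ Icc (0:ℝ) 1 := by
  induction n generalizing y with
  | zero => exact hv y
  | succ n ih => rw [Function.iterate_succ_apply']; exact Zop_mem_Icc hρ ih y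

lemma exists_Zop_iterate_eq_one (hρ : Admissible ρ) {v : X → ℝ}
    (hv : ∀ z, v z ∈ Icc (0:ℝ) 1) {w : X} (hw : v w = 1) (n : ℕ) :
    ∃ y, (Zop f ρ)^[n] v y = 1 := by
  induction n with
  | zero => exact ⟨w, hw⟩
  | succ n ih =>
    obtain ⟨y, hy⟩ := ih
    rw [Function.iterate_succ_apply']
    exact exists_Zop_eq_one hρ (Zop_iterate_mem_Icc hρ hv n) hy

lemma setOf_Zop_iterate_pos_subset (hρ : Admissible ρ) {v : X → ℝ}
    (hv : ∀ z, v z ∈ Icc (0:ℝ) 1) {K : Set X} (hK : {z | 0 < v z} ⊆ K) (n : ℕ) :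
    {y | 0 < (Zop f ρ)^[n] v y} ⊆ (fractalOp f)^[n] K := by
  induction n with
  | zero => exact hK
  | succ n ih =>
    simp only [Function.iterate_succ_apply']
    exact (setOf_Zop_pos_subset hρ fun z => (Zop_iterate_mem_Icc hρ hv n z).1).trans
      (iUnion_mono fun i => image_mono ih)

lemma isCompact_fractalOp [TopologicalSpace X] [Finite I] (hf : ∀ i, Continuous (f i))
    {K : Set X} (hK : IsCompact K) : IsCompact (fractalOp f K) :=
  isCompact_iUnion fun i => hK.image (hf i)

lemma isCompact_fractalOp_iterate [TopologicalSpace X] [Finite I] (hf : ∀ i, Continuous (f i))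
    {K : Set X} (hK : IsCompact K) (n : ℕ) : IsCompact ((fractalOp f)^[n] K) := by
  induction n with
  | zero => exact hK
  | succ n ih => rw [Function.iterate_succ_apply']; exact isCompact_fractalOp hf ih

end Iterates

section FuzzyPoint

variable {X : Type*} [DecidableEq X]

lemma fdelta_mem_Icc (x y : X) : fdelta x y ∈ Icc (0:ℝ) 1 := by
  unfold fdelta; split_ifs <;> norm_num

lemma fdelta_self (x : X) : fdelta x x = 1 := if_pos rfl

lemma setOf_fdelta_pos_subset (x : X) : {y | 0 < fdelta x y} ⊆ {x} := by
  intro y hy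
  by_contra hne
  simp [fdelta, show y ≠ x from hne] at hy

end FuzzyPoint

section Cuts

variable {X : Type*} [MetricSpace X]

lemma cut_subset_fsupp {u : X → ℝ} {α : ℝ} (hα : 0 < α) : {z | α ≤ u z} ⊆ fsupp u :=
  fun _ hz => subset_closure (hα.trans_le hz)

lemma hausdorffDist_cut_le_dInfty {u v : X → ℝ} (hu : Bornology.IsBounded (fsupp u))
    (hv : Bornology.IsBounded (fsupp v)) {α : ℝ} (hα : α ∈ Ioc (0:ℝ) 1) :
    hausdorffDist {z | α ≤ u z} {z | α ≤ v z} ≤ dInfty u v := by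
  unfold dInfty
  refine le_ciSup (f := fun β : Ioc (0:ℝ) 1 => hausdorffDist {z | (β:ℝ) ≤ u z} {z | (β:ℝ) ≤ v z})
    ⟨diam (fsupp u ∪ fsupp v), ?_⟩ (⟨α, hα⟩ : Ioc (0:ℝ) 1)
  rintro _ ⟨⟨β, hβ⟩, rfl⟩
  dsimp only
  replace hβ := hβ.1
  have hsub : {z | β ≤ u z} ∪ {z | β ≤ v z} ⊆ fsupp u ∪ fsupp v :=
    union_subset_union (cut_subset_fsupp hβ) (cut_subset_fsupp hβ)
  have hbdd := hu.union hv
  rcases eq_empty_or_nonempty {z | β ≤ u z} with he | hne_u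
  · rw [he, hausdorffDist_empty']; exact diam_nonneg
  rcases eq_empty_or_nonempty {z | β ≤ v z} with he | hne_v
  · rw [he, hausdorffDist_empty]; exact diam_nonneg
  calc hausdorffDist {z | β ≤ u z} {z | β ≤ v z}
      ≤ diam ({z | β ≤ u z} ∪ {z | β ≤ v z}) :=
        hausdorffDist_le_diam hne_u (hbdd.subset (subset_union_left.trans hsub))
          hne_v (hbdd.subset (subset_union_right.trans hsub))
    _ ≤ diam (fsupp u ∪ fsupp v) := diam_mono hsub hbdd

lemma infDist_le_dInfty_add_hausdorffDist {v w : X → ℝ} {F A : Set X} {y : X}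
    (hv : ∃ z, v z = 1) (hvF : {z | 0 < v z} ⊆ F) (hF : Bornology.IsBounded F)
    (hw : Bornology.IsBounded (fsupp w)) (hA : A.Nonempty) (hAb : Bornology.IsBounded A)
    (hy : w y ∈ Ioc (0:ℝ) 1) :
    infDist y A ≤ dInfty v w + hausdorffDist F A := by
  obtain ⟨z, hz⟩ := hv
  set s := {z | w y ≤ v z}
  set t := {z | w y ≤ w z}
  have hs : s.Nonempty := ⟨z, show w y ≤ v z by rw [hz]; exact hy.2⟩
  have hsF : s ⊆ F := fun z' hz' => hvF (hy.1.trans_le hz')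
  have hvb : Bornology.IsBounded (fsupp v) := (hF.subset hvF).closure
  have hts : infDist y s ≤ hausdorffDist t s :=
    infDist_le_hausdorffDist_of_mem (show w y ≤ w y from le_rfl) <|
      hausdorffEDist_ne_top_of_nonempty_of_bounded ⟨y, show w y ≤ w y from le_rfl⟩ hs
        (hw.subset (cut_subset_fsupp hy.1)) (hvb.subset (cut_subset_fsupp hy.1))
  calc infDist y A ≤ infDist y F + hausdorffDist F A :=
        infDist_le_infDist_add_hausdorffDist <|
          hausdorffEDist_ne_top_of_nonempty_of_bounded (hs.mono hsF) hA hF hAb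
    _ ≤ infDist y s + hausdorffDist F A := by gcongr; exact infDist_le_infDist_of_subset hsF hs
    _ ≤ dInfty v w + hausdorffDist F A := by
        gcongr
        exact hts.trans (hausdorffDist_comm.trans_le (hausdorffDist_cut_le_dInfty hvb hw hy))

end Cuts

theorem stmt15_general {X I : Type*} [MetricSpace X] [DecidableEq X]
    [Finite I]
    (f : I → X → X) (hcont : ∀ i, Continuous (f i))
    (ρ : I → ℝ → ℝ) (hρ : Admissible ρ)
    (x : X)
    (ux : X → ℝ) (huxStar : IsFuzzyStar ux)
    (hux : Tendsto (fun n => dInfty ((Zop f ρ)^[n] (fdelta x)) ux) atTop (nhds 0))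
    (Ax : Set X) (hAxcp : IsCompact Ax) (hAxne : Ax.Nonempty)
    (hAx : Tendsto (fun n => hausdorffDist ((fractalOp f)^[n] {x}) Ax) atTop (nhds 0)) :
    fsupp ux ⊆ Ax := by
  refine closure_minimal (fun y hy => ?_) hAxcp.isClosed
  rw [hAxcp.isClosed.mem_iff_infDist_zero hAxne]
  have hbound : ∀ n, infDist y Ax ≤
      dInfty ((Zop f ρ)^[n] (fdelta x)) ux + hausdorffDist ((fractalOp f)^[n] {x}) Ax := fun n =>
    infDist_le_dInfty_add_hausdorffDist
      (exists_Zop_iterate_eq_one hρ (fdelta_mem_Icc x) (fdelta_self x) n)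
      (setOf_Zop_iterate_pos_subset hρ (fdelta_mem_Icc x) (setOf_fdelta_pos_subset x) n)
      (isCompact_fractalOp_iterate hcont isCompact_singleton n).isBounded
      huxStar.1.2.2.isBounded hAxne hAxcp.isBounded ⟨hy, (huxStar.1.1 y).2⟩
  have hlim := ge_of_tendsto' (hux.add hAx) hbound
  exact le_antisymm (by simpa using hlim) infDist_nonneg

/-- Remark 2.8: `supp u_x ⊆ A_x`. -/
theorem stmt15 {X I : Type*} [MetricSpace X] [CompleteSpace X] [DecidableEq X]
    [Finite I] [Nonempty I]
    (f : I → X → X) (hcont : ∀ i, Continuous (f i))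
    (C : ℝ) (hC0 : 0 ≤ C) (hC1 : C < 1) (horb : OrbitalContr f C)
    (ρ : I → ℝ → ℝ) (hρ : Admissible ρ)
    (u : X → ℝ) (hu : InFS f u)
    (x : X) (hx : 0 < u x)
    (ux : X → ℝ) (huxStar : IsFuzzyStar ux)
    (hux : Tendsto (fun n => dInfty ((Zop f ρ)^[n] (fdelta x)) ux) atTop (nhds 0))
    (Ax : Set X) (hAxcp : IsCompact Ax) (hAxne : Ax.Nonempty)
    (hAx : Tendsto (fun n => hausdorffDist ((fractalOp f)^[n] {x}) Ax) atTop (nhds 0)) :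
    fsupp ux ⊆ Ax :=
  stmt15_general f hcont ρ hρ x ux huxStar hux Ax hAxcp hAxne hAx
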